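/- arXiv:2410.23547 — 11 statements merged into one kernel-verified Lean document; each statement's English description precedes it below -/
import Mathlib

section
/- Let Φ: G → Aut(H) be an action of a group G on a group H. A map 𝓑: H → G is a relative Rota-Baxter operator (i.e. 𝓑(a)·𝓑(b) = 𝓑(a · Φ(𝓑(a))b) for all a, b ∈ H) if and only if the graph Gr(𝓑) = {(𝓑(h), h) | h ∈ H} is a subgroup of the semidirect product group G ⋉_Φ H. -/
/-!
Multiplying two such pairs `(a, 𝓑 a)` and `(b, 𝓑 b)` gives `(a · Φ(𝓑 a) b, 𝓑 a · 𝓑 b)`, so closure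
of the graph under multiplication is literally the Rota-Baxter identity. Conversely the identity
forces `𝓑 1 = 1` and `𝓑 (Φ(𝓑 a)⁻¹ a⁻¹) = (𝓑 a)⁻¹`, which give the unit and the inverses.

Mathlib writes `G ⋉_Φ H` as `H ⋊[Φ] G`, with the `H`-coordinate `left` and the `G`-coordinate
`right`.
-/

namespace SemidirectProduct

variable {G H : Type*} [Group G] [Group H] (Φ : G →* MulAut H)

def graph (𝓑 : H → G) : Set (H ⋊[Φ] G) :=
  Set.range fun h : H => (⟨h, 𝓑 h⟩ : H ⋊[Φ] G)

variable {Φ} {𝓑 : H → G}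

theorem mem_graph {x : H ⋊[Φ] G} : x ∈ graph Φ 𝓑 ↔ x.right = 𝓑 x.left := by
  constructor
  · rintro ⟨h, rfl⟩
    rfl
  · intro hx
    exact ⟨x.left, by ext <;> simp [hx]⟩

end SemidirectProduct

section RotaBaxter

open SemidirectProduct

variable {G H : Type*} [Group G] [Group H]

def IsRelRotaBaxter (Φ : G →* MulAut H) (𝓑 : H → G) : Prop :=
  ∀ a b : H, 𝓑 a * 𝓑 b = 𝓑 (a * Φ (𝓑 a) b)

namespace IsRelRotaBaxter

variable {Φ : G →* MulAut H} {𝓑 : H → G}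

theorem map_one (h𝓑 : IsRelRotaBaxter Φ 𝓑) : 𝓑 1 = 1 := by
  simpa using (h𝓑 1 1).symm

theorem map_inv_apply (h𝓑 : IsRelRotaBaxter Φ 𝓑) (a : H) :
    𝓑 (Φ (𝓑 a)⁻¹ a⁻¹) = (𝓑 a)⁻¹ := by
  refine eq_inv_of_mul_eq_one_right ?_
  rw [h𝓑, map_inv Φ, MulAut.apply_inv_self, mul_inv_cancel, h𝓑.map_one]

def graphSubgroup (h𝓑 : IsRelRotaBaxter Φ 𝓑) : Subgroup (H ⋊[Φ] G) where
  carrier := graph Φ 𝓑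
  one_mem' := mem_graph.2 h𝓑.map_one.symm
  mul_mem' {x y} hx hy := by
    rw [mem_graph] at hx hy ⊢
    rw [mul_left, mul_right, hx, hy, h𝓑]
  inv_mem' {x} hx := by
    rw [mem_graph] at hx ⊢
    rw [inv_left, inv_right, hx, h𝓑.map_inv_apply]

theorem coe_graphSubgroup (h𝓑 : IsRelRotaBaxter Φ 𝓑) :
    (h𝓑.graphSubgroup : Set (H ⋊[Φ] G)) = graph Φ 𝓑 :=
  rfl

end IsRelRotaBaxter

theorem isRelRotaBaxter_of_mul_mem_graph {Φ : G →* MulAut H} {𝓑 : H → G}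
    (hmul : ∀ x y, x ∈ graph Φ 𝓑 → y ∈ graph Φ 𝓑 → x * y ∈ graph Φ 𝓑) :
    IsRelRotaBaxter Φ 𝓑 := by
  intro a b
  have hab := hmul ⟨a, 𝓑 a⟩ ⟨b, 𝓑 b⟩ (mem_graph.2 rfl) (mem_graph.2 rfl)
  exact mem_graph.1 hab

end RotaBaxter

/-- A map `𝓑 : H → G` is a relative Rota-Baxter operator with respect to the
action `Φ : G → Aut(H)` iff its graph is a subgroup of the semidirect product
group `G ⋉_Φ H` (realized in Mathlib as `H ⋊[Φ] G`, whose multiplication is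
`(h₁,g₁)(h₂,g₂) = (h₁ · Φ(g₁)h₂, g₁g₂)`). -/
theorem graph_subgroup_iff_relative_rota_baxter
    {G H : Type*} [Group G] [Group H] (Φ : G →* MulAut H) (𝓑 : H → G) :
    (∀ a b : H, 𝓑 a * 𝓑 b = 𝓑 (a * Φ (𝓑 a) b)) ↔
      ∃ S : Subgroup (H ⋊[Φ] G),
        (S : Set (H ⋊[Φ] G)) = Set.range (fun h : H => (⟨h, 𝓑 h⟩ : H ⋊[Φ] G)) := by
  constructor
  · intro h𝓑
    exact ⟨IsRelRotaBaxter.graphSubgroup h𝓑, IsRelRotaBaxter.coe_graphSubgroup h𝓑⟩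
  · rintro ⟨S, hS⟩
    refine isRelRotaBaxter_of_mul_mem_graph fun x y hx hy => ?_
    rw [SemidirectProduct.graph, ← hS] at hx hy ⊢
    exact S.mul_mem hx hy
end

section
/- Let (𝔤, 𝔥, φ, B) be a relative Rota-Baxter Lie algebra of weight 1. Define a new bracket on 𝔥 by [u,v]_B = φ(B(u))v − φ(B(v))u + [u,v]_𝔥. Then (𝔥, [·,·]_B) is a Lie algebra, and B: (𝔥, [·,·]_B) → (𝔤, [·,·]_𝔤) is a Lie algebra homomorphism. -/
/-- Given a relative Rota-Baxter Lie algebra `(𝔤, 𝔥, φ, B)` of weight 1, the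
descendent bracket `[u,v]_B = φ(B u)v − φ(B v)u + [u,v]` makes `𝔥` a Lie algebra
(it is bilinear, alternating and satisfies the Leibniz/Jacobi identity), and
`B : (𝔥, [·,·]_B) → 𝔤` is a Lie algebra homomorphism. -/
theorem descendent_bracket_lie_algebra_and_hom
    {R 𝔤 𝔥 : Type*} [CommRing R]
    [LieRing 𝔤] [LieAlgebra R 𝔤] [LieRing 𝔥] [LieAlgebra R 𝔥]
    (φ : 𝔤 →ₗ⁅R⁆ LieDerivation R 𝔥 𝔥) (B : 𝔥 →ₗ[R] 𝔤)
    (hB : ∀ u v : 𝔥, ⁅B u, B v⁆ = B (φ (B u) v - φ (B v) u + ⁅u, v⁆))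
    (br : 𝔥 → 𝔥 → 𝔥)
    (hbr : ∀ u v : 𝔥, br u v = φ (B u) v - φ (B v) u + ⁅u, v⁆) :
    (∀ u v w : 𝔥, br (u + v) w = br u w + br v w) ∧
    (∀ u v w : 𝔥, br u (v + w) = br u v + br u w) ∧
    (∀ (c : R) (u v : 𝔥), br (c • u) v = c • br u v) ∧
    (∀ (c : R) (u v : 𝔥), br u (c • v) = c • br u v) ∧
    (∀ u : 𝔥, br u u = 0) ∧
    (∀ u v w : 𝔥, br u (br v w) = br (br u v) w + br v (br u w)) ∧
    (∀ u v : 𝔥, B (br u v) = ⁅B u, B v⁆) := by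
  have hBbr : ∀ u v : 𝔥, B (br u v) = ⁅B u, B v⁆ := fun u v => by
    rw [hbr, ← hB]
  refine ⟨?_, ?_, ?_, ?_, ?_, ?_, hBbr⟩
  · intro u v w
    simp only [hbr, map_add, LieDerivation.coe_add, LieDerivation.add_apply,
      add_lie]
    abel
  · intro u v w
    simp only [hbr, map_add, LieDerivation.coe_add, LieDerivation.add_apply,
      lie_add]
    abel
  · intro c u v
    simp only [hbr, map_smul, LieDerivation.smul_apply, smul_lie, smul_add,
      smul_sub]
  · intro c u v
    simp only [hbr, map_smul, LieDerivation.smul_apply, lie_smul, smul_add,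
      smul_sub]
  · intro u
    simp [hbr]
  · intro u v w
    simp only [hbr]
    rw [← hB v w, ← hB u v, ← hB u w]
    simp only [LieHom.map_lie, LieDerivation.commutator_apply,
      LieDerivation.apply_lie_eq_add, map_sub, map_add, lie_sub, sub_lie, lie_add, add_lie]
    rw [leibniz_lie u v w]
    have h1 : ⁅u, φ (B w) v⁆ = -⁅φ (B w) v, u⁆ := (lie_skew _ _).symm
    have h2 : ⁅v, φ (B w) u⁆ = -⁅φ (B w) u, v⁆ := (lie_skew _ _).symm
    have h3 : ⁅v, φ (B u) w⁆ = -⁅φ (B u) w, v⁆ := (lie_skew _ _).symm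
    have h4 : ⁅u, φ (B v) w⁆ = -⁅φ (B v) w, u⁆ := (lie_skew _ _).symm
    abel_nf
    rw [h1, h2, h3, h4]
    abel
end

section
/- Let (𝔤, 𝔥, φ, B) be a relative Rota-Baxter Lie algebra. Then (𝔤, Gr(B); φ̄, θ̄) is a matched pair of Lie algebras, where φ̄(x)(B(v), v) = (B(φ(x)v), φ(x)v) and θ̄(B(v), v)(x) = B(φ(x)v) + [B(v), x]_𝔤. In particular, θ̄: Gr(B) → 𝔤𝔩(𝔤) is a representation of the Lie algebra Gr(B) on 𝔤, φ̄: 𝔤 → 𝔤𝔩(Gr(B)) is a representation of 𝔤 on Gr(B), and the two matched-pair compatibility conditions hold. -/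
/-- For a relative Rota-Baxter Lie algebra `(𝔤, 𝔥, φ, B)`, the pair
`(𝔤, Gr(B); φ̄, θ̄)` is a matched pair of Lie algebras.  We identify the graph
`Gr(B) ⊆ 𝔤 ⋉_φ 𝔥` with `𝔥` via `u ↦ (B u, u)`; under this identification the
bracket of `Gr(B)` becomes `brB u v = φ(B u)v − φ(B v)u + [u,v]`, the
representation `φ̄` of `𝔤` on `Gr(B)` becomes `x ↦ φ(x)`, and the representation
`θ̄` of `Gr(B)` on `𝔤` is `θ̄(u)x = B(φ(x)u) + [B u, x]`.  The conclusions state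
that `φ̄` and `θ̄` are representations and that the two matched-pair
compatibility conditions hold. -/
theorem relative_rota_baxter_matched_pair
    {R 𝔤 𝔥 : Type*} [CommRing R]
    [LieRing 𝔤] [LieAlgebra R 𝔤] [LieRing 𝔥] [LieAlgebra R 𝔥]
    (φ : 𝔤 →ₗ⁅R⁆ LieDerivation R 𝔥 𝔥) (B : 𝔥 →ₗ[R] 𝔤)
    (hB : ∀ u v : 𝔥, ⁅B u, B v⁆ = B (φ (B u) v - φ (B v) u + ⁅u, v⁆))
    (brB : 𝔥 → 𝔥 → 𝔥)
    (hbrB : ∀ u v : 𝔥, brB u v = φ (B u) v - φ (B v) u + ⁅u, v⁆)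
    (θ : 𝔥 → 𝔤 → 𝔤)
    (hθ : ∀ (v : 𝔥) (x : 𝔤), θ v x = B (φ x v) + ⁅B v, x⁆) :
    -- φ̄ is a representation of 𝔤 on Gr(B)
    (∀ (x y : 𝔤) (u : 𝔥), φ ⁅x, y⁆ u = φ x (φ y u) - φ y (φ x u)) ∧
    -- θ̄ is a representation of Gr(B) on 𝔤
    (∀ (u v : 𝔥) (x : 𝔤), θ (brB u v) x = θ u (θ v x) - θ v (θ u x)) ∧
    -- first matched-pair compatibility condition
    (∀ (x : 𝔤) (u v : 𝔥),
      φ x (brB u v) = brB (φ x u) v + brB u (φ x v) + φ (θ v x) u - φ (θ u x) v) ∧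
    -- second matched-pair compatibility condition
    (∀ (u : 𝔥) (x y : 𝔤),
      θ u ⁅x, y⁆ = ⁅θ u x, y⁆ + ⁅x, θ u y⁆ + θ (φ y u) x - θ (φ x u) y) := by
  have hrep : ∀ (x y : 𝔤) (u : 𝔥), φ ⁅x, y⁆ u = φ x (φ y u) - φ y (φ x u) := by
    intro x y u
    rw [LieHom.map_lie, LieDerivation.lie_apply]
  refine ⟨hrep, ?_, ?_, ?_⟩
  · intro u v x
    have h1 : B (brB u v) = ⁅B u, B v⁆ := by rw [hbrB, hB]
    rw [hθ (brB u v) x, h1, lie_lie]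
    simp only [hθ, hbrB, map_add, map_sub, hB, hrep,
      LieDerivation.apply_lie_eq_add, lie_add, add_lie, lie_sub, sub_lie,
      LieDerivation.add_apply]
    simp only [← lie_skew v ((φ x) u), map_neg]
    abel
  · intro x u v
    simp only [hθ, hbrB, map_add, map_sub, hrep, LieDerivation.apply_lie_eq_add,
      LieDerivation.add_apply]
    abel
  · intro u x y
    simp only [hθ, hbrB, map_add, map_sub, hrep, lie_add, add_lie, lie_sub, sub_lie, lie_lie,
      LieDerivation.add_apply]
    simp only [← lie_skew x (B ((φ y) u))]
    abel
end

section
/- Let (𝔤, 𝔥, φ, B) be a relative Rota-Baxter Lie algebra. The linear map κ: 𝔤 ⊕ Gr(B) → 𝔤 ⋉_φ 𝔥 defined by κ(x, (B(u), u)) = (x + B(u), u) is an isomorphism of Lie algebras, where 𝔤 ⊕ Gr(B) carries the matched-pair bracket [·,·]_⋈ associated to (𝔤, Gr(B); φ̄, θ̄) and 𝔤 ⋉_φ 𝔥 carries the semidirect product bracket. -/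
/-- For a relative Rota-Baxter Lie algebra `(𝔤, 𝔥, φ, B)`, the map
`κ(x, (B u, u)) = (x + B u, u)` is an isomorphism of Lie algebras from
`𝔤 ⊕ Gr(B)` with the matched-pair bracket to the semidirect product `𝔤 ⋉_φ 𝔥`.
We identify `Gr(B)` with `𝔥` via `u ↦ (B u, u)`, so `κ` becomes
`(x, u) ↦ (x + B u, u)`, the matched-pair bracket on `𝔤 ⊕ Gr(B)` becomes
`brMatch`, and the claim is that `κ` is bijective and intertwines `brMatch`
with the semidirect product bracket. -/
theorem kappa_lie_algebra_isomorphism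
    {R 𝔤 𝔥 : Type*} [CommRing R]
    [LieRing 𝔤] [LieAlgebra R 𝔤] [LieRing 𝔥] [LieAlgebra R 𝔥]
    (φ : 𝔤 →ₗ⁅R⁆ LieDerivation R 𝔥 𝔥) (B : 𝔥 →ₗ[R] 𝔤)
    (hB : ∀ u v : 𝔥, ⁅B u, B v⁆ = B (φ (B u) v - φ (B v) u + ⁅u, v⁆))
    (brB : 𝔥 → 𝔥 → 𝔥)
    (hbrB : ∀ u v : 𝔥, brB u v = φ (B u) v - φ (B v) u + ⁅u, v⁆)
    (θ : 𝔥 → 𝔤 → 𝔤)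
    (hθ : ∀ (v : 𝔥) (x : 𝔤), θ v x = B (φ x v) + ⁅B v, x⁆)
    (brMatch : 𝔤 × 𝔥 → 𝔤 × 𝔥 → 𝔤 × 𝔥)
    (hbrMatch : ∀ p q : 𝔤 × 𝔥,
      brMatch p q = (⁅p.1, q.1⁆ + θ p.2 q.1 - θ q.2 p.1,
                     φ p.1 q.2 - φ q.1 p.2 + brB p.2 q.2))
    (sdBracket : 𝔤 × 𝔥 → 𝔤 × 𝔥 → 𝔤 × 𝔥)
    (hsd : ∀ p q : 𝔤 × 𝔥,
      sdBracket p q = (⁅p.1, q.1⁆, φ p.1 q.2 - φ q.1 p.2 + ⁅p.2, q.2⁆))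
    (κ : 𝔤 × 𝔥 → 𝔤 × 𝔥)
    (hκ : ∀ p : 𝔤 × 𝔥, κ p = (p.1 + B p.2, p.2)) :
    Function.Bijective κ ∧
    (∀ p q : 𝔤 × 𝔥, κ (brMatch p q) = sdBracket (κ p) (κ q)) := by
  constructor
  · have : Function.LeftInverse (fun p : 𝔤 × 𝔥 => (p.1 - B p.2, p.2)) κ ∧
        Function.RightInverse (fun p : 𝔤 × 𝔥 => (p.1 - B p.2, p.2)) κ := by
      constructor <;> intro p <;> simp [hκ]
    exact ⟨this.1.injective, this.2.surjective⟩
  · intro p q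
    obtain ⟨x, u⟩ := p
    obtain ⟨y, v⟩ := q
    simp only [hκ, hbrMatch, hsd, hθ, hbrB, Prod.mk.injEq]
    constructor
    · simp only [map_add, map_sub, lie_add, add_lie]
      rw [hB, ← lie_skew (B v) x]
      simp only [map_add, map_sub, hbrB]
      abel
    · have : (φ (x + B u)) v = φ x v + φ (B u) v := by
        rw [map_add]; rfl
      have h2 : (φ (y + B v)) u = φ y u + φ (B v) u := by
        rw [map_add]; rfl
      rw [this, h2]
      abel
end

section
/- Let G be a group with a Rota-Baxter operator 𝓑: G → G of weight 1, i.e. 𝓑(g)𝓑(h) = 𝓑(g·𝓑(g)h𝓑(g)⁻¹) for all g, h ∈ G. Then the maps F₋, F₊: Gr(𝓑) → G defined on the graph subgroup by F₋(𝓑(g), g) = 𝓑(g) and F₊(𝓑(g), g) = g·𝓑(g) are group homomorphisms. -/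
/-- `Gr(𝓑)` is identified with `G` via `g ↦ (𝓑 g, g)`, under which the graph product becomes
`p g₁ g₂ = g₁ · 𝓑(g₁) g₂ 𝓑(g₁)⁻¹`. -/
theorem graph_group_factorization_homs
    {G : Type*} [Group G] (𝓑 : G → G)
    (h𝓑 : ∀ g h : G, 𝓑 g * 𝓑 h = 𝓑 (g * (𝓑 g * h * (𝓑 g)⁻¹)))
    (p : G → G → G)
    (hp : ∀ g₁ g₂ : G, p g₁ g₂ = g₁ * (𝓑 g₁ * g₂ * (𝓑 g₁)⁻¹)) :
    (∀ g₁ g₂ : G, 𝓑 (p g₁ g₂) = 𝓑 g₁ * 𝓑 g₂) ∧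
    (∀ g₁ g₂ : G, p g₁ g₂ * 𝓑 (p g₁ g₂) = (g₁ * 𝓑 g₁) * (g₂ * 𝓑 g₂)) := by
  have map_mul_minus : ∀ g₁ g₂ : G, 𝓑 (p g₁ g₂) = 𝓑 g₁ * 𝓑 g₂ := fun g₁ g₂ => by
    rw [hp, h𝓑]
  refine ⟨map_mul_minus, fun g₁ g₂ => ?_⟩
  rw [map_mul_minus, hp]
  simp only [mul_assoc, inv_mul_cancel_left]
end

section
/- Let 𝔤 be the 2-dimensional real Lie algebra with basis e₁, e₂ and bracket [e₁, e₂] = 2e₂. A linear map B: 𝔤 → 𝔤 with matrix (b₁₁ b₁₂; b₂₁ b₂₂) in the basis (e₁, e₂) is a Rota-Baxter operator of weight 1 if and only if B has one of the three forms: (λ 0; μ 0), (λ 0; μ −1), or (−m−1 k; (−m²−m)/k m) with k ≠ 0, for some real parameters λ, μ, m, k. -/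
/-!
Both sides of the Rota-Baxter identity are bilinear and alternating in `(x, y)`, and the bracket
takes values in the line spanned by `e₂`, so the identity holds for all `x, y` as soon as it holds
for `(e₁, e₂)`. There it reads `[Be₁, Be₂] = (tr B + 1) B[e₁, e₂]`, i.e. the two scalar equations
`b₁₂ (tr B + 1) = 0` and `det B = b₂₂ (tr B + 1)`, and the classification is the case split on
whether `b₁₂` vanishes.
-/

def IsRotaBaxter {V : Type*} [Add V] (br : V → V → V) (B : V → V) : Prop :=
  ∀ x y : V, br (B x) (B y) = B (br (B x) y + br x (B y) + br x y)

section TwoDim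

variable {K : Type*} [Field K]

/-- The bracket of the two-dimensional non-abelian Lie algebra with `[e₁, e₂] = c e₂`. -/
def nonabelianBracket (c : K) (x y : K × K) : K × K :=
  (0, c * (x.1 * y.2 - x.2 * y.1))

def linearOfEntries (b11 b12 b21 b22 : K) (x : K × K) : K × K :=
  (b11 * x.1 + b12 * x.2, b21 * x.1 + b22 * x.2)

theorem isRotaBaxter_nonabelianBracket_iff {c : K} (hc : c ≠ 0) (b11 b12 b21 b22 : K) :
    IsRotaBaxter (nonabelianBracket c) (linearOfEntries b11 b12 b21 b22) ↔
      b12 * (b11 + b22 + 1) = 0 ∧ b12 * b21 + b22 * (b22 + 1) = 0 := by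
  simp only [IsRotaBaxter, nonabelianBracket, linearOfEntries, Prod.mk_add_mk, Prod.ext_iff]
  constructor
  · intro h
    obtain ⟨h₁, h₂⟩ := h (1, 0) (0, 1)
    refine ⟨?_, ?_⟩
    · have : c * (b12 * (b11 + b22 + 1)) = 0 := by linear_combination -h₁
      exact (mul_eq_zero_iff_left hc).1 this
    · have : c * (b12 * b21 + b22 * (b22 + 1)) = 0 := by linear_combination -h₂
      exact (mul_eq_zero_iff_left hc).1 this
  · rintro ⟨h₁, h₂⟩ x y
    exact ⟨by linear_combination (-c * (x.1 * y.2 - x.2 * y.1)) * h₁,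
      by linear_combination (-c * (x.1 * y.2 - x.2 * y.1)) * h₂⟩

theorem rotaBaxter_equations_iff (b11 b12 b21 b22 : K) :
    b12 * (b11 + b22 + 1) = 0 ∧ b12 * b21 + b22 * (b22 + 1) = 0 ↔
      (b12 = 0 ∧ b22 = 0) ∨ (b12 = 0 ∧ b22 = -1) ∨
        (b12 ≠ 0 ∧ b11 = -b22 - 1 ∧ b21 = (-b22 ^ 2 - b22) / b12) := by
  by_cases hb12 : b12 = 0
  · subst hb12
    simp only [zero_mul, zero_add, true_and, mul_eq_zero, ne_eq, not_true_eq_false, false_and,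
      or_false, add_eq_zero_iff_eq_neg]
  · simp only [hb12, false_and, false_or, ne_eq, not_false_eq_true, true_and,
      mul_eq_zero_iff_left hb12]
    rw [eq_div_iff hb12]
    constructor
    · rintro ⟨htr, hdet⟩
      exact ⟨by linear_combination htr, by linear_combination hdet⟩
    · rintro ⟨htr, hdet⟩
      exact ⟨by linear_combination htr, by linear_combination hdet⟩

end TwoDim

/-- Classification of Rota-Baxter operators of weight 1 on the 2-dimensional
non-abelian real Lie algebra with basis `e₁ = (1,0)`, `e₂ = (0,1)` and bracket
`[e₁, e₂] = 2e₂`.  A linear map with matrix `(b₁₁ b₁₂; b₂₁ b₂₂)` is a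
Rota-Baxter operator iff it has one of the three forms
`(λ 0; μ 0)`, `(λ 0; μ −1)`, or `(−m−1 k; (−m²−m)/k m)` with `k ≠ 0`
(here `λ = b₁₁`, `μ = b₂₁`, `k = b₁₂`, `m = b₂₂`). -/
theorem rota_baxter_two_dim_classification
    (b11 b12 b21 b22 : ℝ)
    (br : ℝ × ℝ → ℝ × ℝ → ℝ × ℝ)
    (hbr : ∀ x y : ℝ × ℝ, br x y = (0, 2 * (x.1 * y.2 - x.2 * y.1)))
    (B : ℝ × ℝ → ℝ × ℝ)
    (hB : ∀ x : ℝ × ℝ, B x = (b11 * x.1 + b12 * x.2, b21 * x.1 + b22 * x.2)) :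
    (∀ x y : ℝ × ℝ, br (B x) (B y) = B (br (B x) y + br x (B y) + br x y)) ↔
      ((b12 = 0 ∧ b22 = 0) ∨ (b12 = 0 ∧ b22 = -1) ∨
        (b12 ≠ 0 ∧ b11 = -b22 - 1 ∧ b21 = (-b22 ^ 2 - b22) / b12)) := by
  obtain rfl : br = nonabelianBracket 2 := funext₂ hbr
  obtain rfl : B = linearOfEntries b11 b12 b21 b22 := funext hB
  exact (isRotaBaxter_nonabelianBracket_iff two_ne_zero b11 b12 b21 b22).trans
    (rotaBaxter_equations_iff b11 b12 b21 b22)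
end

section
/- Let G = {(a, b) : a > 0, b ∈ ℝ} be the group of 2×2 upper triangular matrices (a b; 0 1/a) with a > 0, under matrix multiplication. For fixed λ ≠ 0, −1 and μ ∈ ℝ, the map 𝓑: G → G given by 𝓑(a b; 0 a⁻¹) = (a^λ, (μ/(2λ))(a^λ − a^{−λ}); 0, a^{−λ}) satisfies the Rota-Baxter group identity 𝓑(g)𝓑(h) = 𝓑(g·𝓑(g)h𝓑(g)⁻¹) for all g, h ∈ G. -/
open Matrix

/-- On the group `G` of matrices `(a b; 0 1/a)` with `a > 0`, for `λ ≠ 0, −1`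
and `μ ∈ ℝ`, the map `𝓑(a b; 0 a⁻¹) = (a^λ, (μ/(2λ))(a^λ − a^{−λ}); 0, a^{−λ})`
satisfies the Rota-Baxter group identity `𝓑(g)𝓑(h) = 𝓑(g · 𝓑(g) h 𝓑(g)⁻¹)`. -/
theorem rota_baxter_group_case_1_1
    (l μ : ℝ) (hl0 : l ≠ 0) (hl1 : l ≠ -1)
    (𝓑 : Matrix (Fin 2) (Fin 2) ℝ → Matrix (Fin 2) (Fin 2) ℝ)
    (h𝓑 : ∀ A : Matrix (Fin 2) (Fin 2) ℝ,
      𝓑 A = !![A 0 0 ^ l, (μ / (2 * l)) * (A 0 0 ^ l - A 0 0 ^ (-l));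
               0, A 0 0 ^ (-l)]) :
    ∀ A C : Matrix (Fin 2) (Fin 2) ℝ,
      0 < A 0 0 → A 1 0 = 0 → A 1 1 = (A 0 0)⁻¹ →
      0 < C 0 0 → C 1 0 = 0 → C 1 1 = (C 0 0)⁻¹ →
      𝓑 A * 𝓑 C = 𝓑 (A * (𝓑 A * C * (𝓑 A)⁻¹)) := by
  intro A C hA0 hA10 hA11 hC0 hC10 hC11
  have ha := hA0.le
  have hc := hC0.le
  set a := A 0 0 with ha'
  set c := C 0 0 with hc'
  have hal : (0:ℝ) < a ^ l := Real.rpow_pos_of_pos hA0 l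
  have hcl : (0:ℝ) < c ^ l := Real.rpow_pos_of_pos hC0 l
  have hanl : a ^ (-l) = (a ^ l)⁻¹ := Real.rpow_neg ha l
  have hcnl : c ^ (-l) = (c ^ l)⁻¹ := Real.rpow_neg hc l
  have hmul : (a * c) ^ l = a ^ l * c ^ l := Real.mul_rpow ha hc
  have hmuln : (a * c) ^ (-l) = a ^ (-l) * c ^ (-l) := Real.mul_rpow ha hc
  have hinv : (𝓑 A)⁻¹ =
      !![a ^ (-l), -((μ / (2 * l)) * (a ^ l - a ^ (-l))); 0, a ^ l] := by
    apply Matrix.inv_eq_left_inv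
    rw [h𝓑, ← ha']
    ext i j
    fin_cases i <;> fin_cases j <;>
      simp [Matrix.mul_apply, Fin.sum_univ_two, hanl] <;>
      field_simp <;> ring
  have h00 : (A * (𝓑 A * C * (𝓑 A)⁻¹)) 0 0 = a * c := by
    rw [hinv, h𝓑, Matrix.eta_fin_two A, Matrix.eta_fin_two C, hA10, hC10, hA11, hC11]
    simp [Matrix.mul_fin_two, hanl]
    field_simp
    rw [← ha', ← hc']
    ring
  have key : 𝓑 (A * (𝓑 A * C * (𝓑 A)⁻¹)) =
      !![(a * c) ^ l, (μ / (2 * l)) * ((a * c) ^ l - (a * c) ^ (-l));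
         0, (a * c) ^ (-l)] := by rw [h𝓑, h00]
  rw [key, h𝓑 A, h𝓑 C]
  ext i j
  fin_cases i <;> fin_cases j <;>
    simp [Matrix.mul_apply, Fin.sum_univ_two, hmul, hmuln] <;> ring
end

section
/- Let G be the group of real matrices (a b; 0 1/a) with a > 0. For μ ∈ ℝ, the map 𝓑: G → G defined by 𝓑(a b; 0 a⁻¹) = (1, −b/a + (μ/2)(1 − a⁻²); 0, 1) is a Rota-Baxter operator on G, i.e. 𝓑(g)𝓑(h) = 𝓑(g·𝓑(g)h𝓑(g)⁻¹) for all g, h ∈ G. Its derivative at the identity is the Rota-Baxter operator B on the Lie algebra span{e₁, e₂} with [e₁,e₂] = 2e₂ given by the matrix (0 0; μ −1). -/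
open Matrix

/-- On the group `G` of matrices `(a b; 0 1/a)` with `a > 0`, for `μ ∈ ℝ`, the
map `𝓑(a b; 0 a⁻¹) = (1, −b/a + (μ/2)(1 − a⁻²); 0, 1)` is a Rota-Baxter
operator on `G`, and its derivative at the identity (computed entrywise along
any curve in `G` through the identity with velocity `s e₁ + t e₂ = (s t; 0 −s)`)
is the Rota-Baxter operator on the Lie algebra `span{e₁, e₂}` (with
`[e₁,e₂] = 2e₂`) given by the matrix `(0 0; μ −1)`, i.e.
`s e₁ + t e₂ ↦ (μ s − t) e₂ = (0, μs − t; 0, 0)`. -/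
theorem rota_baxter_group_case_2_1_and_derivative
    (μ : ℝ)
    (𝓑 : Matrix (Fin 2) (Fin 2) ℝ → Matrix (Fin 2) (Fin 2) ℝ)
    (h𝓑 : ∀ A : Matrix (Fin 2) (Fin 2) ℝ,
      𝓑 A = !![1, -(A 0 1) / (A 0 0) + (μ / 2) * (1 - ((A 0 0) ^ 2)⁻¹);
               0, 1]) :
    (∀ A C : Matrix (Fin 2) (Fin 2) ℝ,
      0 < A 0 0 → A 1 0 = 0 → A 1 1 = (A 0 0)⁻¹ →
      0 < C 0 0 → C 1 0 = 0 → C 1 1 = (C 0 0)⁻¹ →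
      𝓑 A * 𝓑 C = 𝓑 (A * (𝓑 A * C * (𝓑 A)⁻¹))) ∧
    (∀ (c : ℝ → Matrix (Fin 2) (Fin 2) ℝ) (s t : ℝ),
      (∀ τ : ℝ, 0 < c τ 0 0 ∧ c τ 1 0 = 0 ∧ c τ 1 1 = (c τ 0 0)⁻¹) →
      c 0 = 1 →
      (∀ i j : Fin 2,
        HasDerivAt (fun τ : ℝ => c τ i j) ((!![s, t; 0, -s] : Matrix (Fin 2) (Fin 2) ℝ) i j) 0) →
      (∀ i j : Fin 2,
        HasDerivAt (fun τ : ℝ => 𝓑 (c τ) i j)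
          ((!![0, μ * s - t; 0, 0] : Matrix (Fin 2) (Fin 2) ℝ) i j) 0)) := by
  constructor
  · intro A C hA0 hA10 hA11 hC0 hC10 hC11
    have ha : A 0 0 ≠ 0 := ne_of_gt hA0
    have hp : C 0 0 ≠ 0 := ne_of_gt hC0
    obtain ⟨x, hx⟩ : ∃ x : ℝ, x = -(A 0 1) / (A 0 0) + (μ / 2) * (1 - ((A 0 0) ^ 2)⁻¹) :=
      ⟨_, rfl⟩
    have hBA : 𝓑 A = !![1, x; 0, 1] := by rw [hx]; exact h𝓑 A
    have hinv : (𝓑 A)⁻¹ = !![1, -x; 0, 1] := by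
      apply inv_eq_right_inv
      rw [hBA]
      ext i j
      fin_cases i <;> fin_cases j <;>
        simp [Matrix.mul_apply, Fin.sum_univ_two]
    have hM : A * (!![1, x; 0, 1] * C * !![1, -x; 0, 1]) =
        !![A 0 0 * C 0 0,
           A 0 0 * (C 0 0 * -x + C 0 1 + x * (C 0 0)⁻¹) + A 0 1 * (C 0 0)⁻¹;
           0, (A 0 0)⁻¹ * (C 0 0)⁻¹] := by
      ext i j
      fin_cases i <;> fin_cases j <;>
        simp only [Matrix.mul_apply, Fin.sum_univ_two, Matrix.cons_val', Matrix.cons_val_zero,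
          Matrix.cons_val_one, Matrix.head_cons, Matrix.head_fin_const, Matrix.empty_val',
          Matrix.cons_val_fin_one, Matrix.of_apply, Fin.mk_zero, Fin.mk_one, hA10, hA11, hC10, hC11] <;> ring
    rw [hinv, hBA, hM, h𝓑 C, h𝓑]
    ext i j
    fin_cases i <;> fin_cases j <;>
      simp only [Matrix.mul_apply, Fin.sum_univ_two, Matrix.cons_val', Matrix.cons_val_zero,
          Matrix.cons_val_one, Matrix.head_cons, Matrix.head_fin_const, Matrix.empty_val',
          Matrix.cons_val_fin_one, Matrix.of_apply, Fin.mk_zero, Fin.mk_one]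
    all_goals subst hx
    all_goals first
      | (field_simp; ring)
      | norm_num
  · intro c s t hG hc0 hder i j
    have h00 : c 0 0 0 = 1 := by rw [hc0]; simp
    have h01 : c 0 0 1 = 0 := by rw [hc0]; simp
    have d00 : HasDerivAt (fun τ : ℝ => c τ 0 0) s 0 := by simpa using hder 0 0
    have d01 : HasDerivAt (fun τ : ℝ => c τ 0 1) t 0 := by simpa using hder 0 1
    have hne : c 0 0 0 ≠ 0 := by rw [h00]; norm_num
    fin_cases i <;> fin_cases j
    · simp only [h𝓑]
      simpa using hasDerivAt_const (0 : ℝ) (1 : ℝ)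
    · simp only [h𝓑]
      have hdiv : HasDerivAt (fun τ : ℝ => -(c τ 0 1) / (c τ 0 0)) (-t) 0 := by
        have := (d01.neg.div d00 hne)
        refine this.congr_deriv ?_
        rw [h00, Pi.neg_apply, h01]; ring
      have hsq : HasDerivAt (fun τ : ℝ => ((c τ 0 0) ^ 2)⁻¹) (-(2 * s)) 0 := by
        have hsq' : HasDerivAt (fun τ : ℝ => (c τ 0 0) ^ 2) (2 * s) 0 := by
          have := d00.pow 2
          refine this.congr_deriv ?_
          rw [h00]; ring
        have := hsq'.inv (by rw [h00]; norm_num)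
        refine this.congr_deriv ?_
        rw [h00]; ring
      have h2 : HasDerivAt (fun τ : ℝ => (μ / 2) * (1 - ((c τ 0 0) ^ 2)⁻¹)) (μ * s) 0 := by
        have := (((hasDerivAt_const (0:ℝ) (1:ℝ)).sub hsq).const_mul (μ / 2))
        refine this.congr_deriv ?_
        ring
      simp only [Matrix.cons_val_one, Matrix.head_cons, Matrix.cons_val_zero,
        Matrix.cons_val', Matrix.head_fin_const, Matrix.empty_val',
        Matrix.cons_val_fin_one, Matrix.of_apply, Fin.mk_zero, Fin.mk_one]
      refine (hdiv.add h2).congr_deriv ?_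
      ring
    · simp only [h𝓑]
      simpa using hasDerivAt_const (0 : ℝ) (0 : ℝ)
    · simp only [h𝓑]
      simpa using hasDerivAt_const (0 : ℝ) (1 : ℝ)
end

section
/- Let H be the Heisenberg group of 3×3 unipotent upper triangular real matrices. The map 𝓑: H → H sending the matrix with entries (1 a b; 0 1 c; 0 0 1) to (1 0 c; 0 1 0; 0 0 1) is a Rota-Baxter operator on H, i.e. 𝓑(g)𝓑(h) = 𝓑(g·𝓑(g)h𝓑(g)⁻¹) for all g, h ∈ H. -/
/-!
The operator takes values in the centre `{heisenberg 0 b 0}` of the Heisenberg group, so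
conjugation by `𝓑 g` is trivial, and it is multiplicative because the `(1, 2)` entry is additive
under multiplication. A homomorphism into the centre satisfies the Rota–Baxter identity:
`𝓑 (g 𝓑(g) h 𝓑(g)⁻¹) = 𝓑 (g h) = 𝓑 g 𝓑 h`.
-/

namespace Matrix

variable {R : Type*} [CommRing R]

def heisenberg (a b c : R) : Matrix (Fin 3) (Fin 3) R :=
  !![1, a, b; 0, 1, c; 0, 0, 1]

@[simp]
lemma heisenberg_zero : heisenberg (0 : R) 0 0 = 1 := by
  ext i j
  fin_cases i <;> fin_cases j <;> rfl

lemma exists_eq_heisenberg {A : Matrix (Fin 3) (Fin 3) R}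
    (h00 : A 0 0 = 1) (h11 : A 1 1 = 1) (h22 : A 2 2 = 1)
    (h10 : A 1 0 = 0) (h20 : A 2 0 = 0) (h21 : A 2 1 = 0) :
    ∃ a b c, A = heisenberg a b c :=
  ⟨A 0 1, A 0 2, A 1 2, by
    ext i j
    fin_cases i <;> fin_cases j <;> simp [heisenberg, *]⟩

lemma heisenberg_mul_heisenberg (a b c a' b' c' : R) :
    heisenberg a b c * heisenberg a' b' c' = heisenberg (a + a') (b + b' + a * c') (c + c') := by
  ext i j
  fin_cases i <;> fin_cases j <;> simp [heisenberg, mul_apply, Fin.sum_univ_three] <;> ring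

lemma commute_heisenberg_center (b a b' c : R) :
    Commute (heisenberg 0 b 0) (heisenberg a b' c) := by
  simp only [Commute, SemiconjBy, heisenberg_mul_heisenberg]
  congr 1 <;> ring

lemma heisenberg_center_inv (b : R) : (heisenberg 0 b 0)⁻¹ = heisenberg 0 (-b) 0 :=
  inv_eq_right_inv (by simp [heisenberg_mul_heisenberg])

lemma heisenberg_center_conj (b a b' c : R) :
    heisenberg 0 b 0 * heisenberg a b' c * (heisenberg 0 b 0)⁻¹ = heisenberg a b' c := by
  rw [(commute_heisenberg_center b a b' c).eq, heisenberg_center_inv, mul_assoc,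
    heisenberg_mul_heisenberg]
  simp

end Matrix

open Matrix

/-- On the Heisenberg group of unipotent upper-triangular 3×3 real matrices,
the map `𝓑 : (1 a b; 0 1 c; 0 0 1) ↦ (1 0 c; 0 1 0; 0 0 1)` is a Rota-Baxter
operator, i.e. `𝓑(g)𝓑(h) = 𝓑(g · 𝓑(g) h 𝓑(g)⁻¹)`. -/
theorem rota_baxter_heisenberg_group
    (𝓑 : Matrix (Fin 3) (Fin 3) ℝ → Matrix (Fin 3) (Fin 3) ℝ)
    (h𝓑 : ∀ A : Matrix (Fin 3) (Fin 3) ℝ,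
      𝓑 A = !![1, 0, A 1 2; 0, 1, 0; 0, 0, 1]) :
    ∀ A C : Matrix (Fin 3) (Fin 3) ℝ,
      A 0 0 = 1 → A 1 1 = 1 → A 2 2 = 1 → A 1 0 = 0 → A 2 0 = 0 → A 2 1 = 0 →
      C 0 0 = 1 → C 1 1 = 1 → C 2 2 = 1 → C 1 0 = 0 → C 2 0 = 0 → C 2 1 = 0 →
      𝓑 A * 𝓑 C = 𝓑 (A * (𝓑 A * C * (𝓑 A)⁻¹)) := by
  intro A C a00 a11 a22 a10 a20 a21 c00 c11 c22 c10 c20 c21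
  obtain ⟨a, b, c, rfl⟩ := exists_eq_heisenberg a00 a11 a22 a10 a20 a21
  obtain ⟨a', b', c', rfl⟩ := exists_eq_heisenberg c00 c11 c22 c10 c20 c21
  have h𝓑_heisenberg : ∀ a b c : ℝ, 𝓑 (heisenberg a b c) = heisenberg 0 c 0 :=
    fun _ _ _ => h𝓑 _
  rw [h𝓑_heisenberg, h𝓑_heisenberg, heisenberg_center_conj, heisenberg_mul_heisenberg a b c,
    h𝓑_heisenberg, heisenberg_mul_heisenberg]
  simp
end

section
/- Let (𝔤, d r) be a factorizable Lie bialgebra with r ∈ 𝔤 ⊗ 𝔤, r₊, r₋: 𝔤* → 𝔤 defined by ⟨r₊(ξ), η⟩ = r(ξ, η), ⟨r₋(ξ), η⟩ = −r(η, ξ), and I = r₊ − r₋ invertible. Then the linear map Î: 𝔤* → Gr(r₋ ∘ I⁻¹) ⊆ 𝔤 ⋉_ad 𝔤 defined by Î(ξ) = (r₋(ξ), I(ξ)) is a Lie algebra isomorphism from (𝔤*, [·,·]_{𝔤*}) onto the graph Lie algebra Gr(r₋ ∘ I⁻¹), where [ξ,η]_{𝔤*} = ad*_{r₊(ξ)}η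 − ad*_{r₋(η)}ξ. -/
/-! Since `B ∘ I = r₋`, the first component of `Î` is `B` applied to the second, so `Î` is `I`
followed by the graph map `x ↦ (B x, x)`; as `I` is bijective, `Î` is injective with range
`Gr(B)`. The bracket identity is the polarization `[a, b] - [c, d] = [c, b - d] + [a - c, d] +
[a - c, b - d]` applied to `a, b = r₊ ξ, r₊ η` and `c, d = r₋ ξ, r₋ η`, using that `r₊` and `r₋`
are homomorphisms for the dual bracket. -/

theorem lie_sub_lie_eq {L : Type*} [LieRing L] (a b c d : L) :
    ⁅a, b⁆ - ⁅c, d⁆ = ⁅c, b - d⁆ + ⁅a - c, d⁆ + ⁅a - c, b - d⁆ := by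
  simp only [lie_sub, sub_lie]
  abel

theorem factorizable_bialgebra_graph_isomorphism_general
    {R 𝔤 : Type*} [Field R] [LieRing 𝔤] [LieAlgebra R 𝔤]
    (rp rm : Module.Dual R 𝔤 →ₗ[R] 𝔤)
    (brD : Module.Dual R 𝔤 → Module.Dual R 𝔤 → Module.Dual R 𝔤)
    (hp : ∀ ξ η : Module.Dual R 𝔤, rp (brD ξ η) = ⁅rp ξ, rp η⁆)
    (hm : ∀ ξ η : Module.Dual R 𝔤, rm (brD ξ η) = ⁅rm ξ, rm η⁆)
    (I : Module.Dual R 𝔤 ≃ₗ[R] 𝔤)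
    (hI : ∀ ξ : Module.Dual R 𝔤, I ξ = rp ξ - rm ξ)
    (B : 𝔤 →ₗ[R] 𝔤) (hB : ∀ x : 𝔤, B x = rm (I.symm x)) :
    (∀ ξ η : Module.Dual R 𝔤,
      ((rm (brD ξ η), I (brD ξ η)) : 𝔤 × 𝔤)
        = (⁅rm ξ, rm η⁆, ⁅B (I ξ), I η⁆ + ⁅I ξ, B (I η)⁆ + ⁅I ξ, I η⁆)) ∧
    Function.Injective (fun ξ : Module.Dual R 𝔤 => ((rm ξ, I ξ) : 𝔤 × 𝔤)) ∧
    Set.range (fun ξ : Module.Dual R 𝔤 => ((rm ξ, I ξ) : 𝔤 × 𝔤))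
      = Set.range (fun x : 𝔤 => ((B x, x) : 𝔤 × 𝔤)) := by
  have hBI : ∀ ξ, B (I ξ) = rm ξ := fun ξ => by rw [hB, I.symm_apply_apply]
  have hgraph : (fun ξ => (rm ξ, I ξ)) = (fun x => (B x, x)) ∘ I :=
    funext fun ξ => by simp only [Function.comp_apply, hBI]
  refine ⟨fun ξ η => ?_, fun ξ η h => I.injective (congrArg Prod.snd h), ?_⟩
  · rw [hBI, hBI, hI, hp, hm, hI ξ, hI η, lie_sub_lie_eq]
  · rw [hgraph, I.surjective.range_comp]

/-- For a factorizable Lie bialgebra `(𝔤, dr)` with `r₊, r₋ : 𝔤* → 𝔤`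
(related by `⟨r₊ ξ, η⟩ = −⟨r₋ η, ξ⟩`, both Lie algebra homomorphisms for the
dual bracket `[ξ,η]_{𝔤*} = ad*_{r₊ξ}η − ad*_{r₋η}ξ`) and `I = r₊ − r₋`
invertible, the map `Î(ξ) = (r₋ ξ, I ξ)` is a Lie algebra isomorphism from
`(𝔤*, [·,·]_{𝔤*})` onto the graph Lie algebra `Gr(r₋ ∘ I⁻¹) ⊆ 𝔤 ⋉_ad 𝔤`:
it is a homomorphism into the graph bracket
`[(Bx,x),(By,y)] = ([Bx,By], [Bx,y] + [x,By] + [x,y])`, is injective, and its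
range is exactly the graph of `B = r₋ ∘ I⁻¹`. -/
theorem factorizable_bialgebra_graph_isomorphism
    {R 𝔤 : Type*} [Field R] [LieRing 𝔤] [LieAlgebra R 𝔤]
    (rp rm : Module.Dual R 𝔤 →ₗ[R] 𝔤)
    (hskew : ∀ ξ η : Module.Dual R 𝔤, η (rp ξ) = -ξ (rm η))
    (brD : Module.Dual R 𝔤 → Module.Dual R 𝔤 → Module.Dual R 𝔤)
    (hbrD : ∀ ξ η : Module.Dual R 𝔤,
      brD ξ η = -(η.comp ((LieAlgebra.ad R 𝔤) (rp ξ)))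
        + ξ.comp ((LieAlgebra.ad R 𝔤) (rm η)))
    (hp : ∀ ξ η : Module.Dual R 𝔤, rp (brD ξ η) = ⁅rp ξ, rp η⁆)
    (hm : ∀ ξ η : Module.Dual R 𝔤, rm (brD ξ η) = ⁅rm ξ, rm η⁆)
    (I : Module.Dual R 𝔤 ≃ₗ[R] 𝔤)
    (hI : ∀ ξ : Module.Dual R 𝔤, I ξ = rp ξ - rm ξ)
    (B : 𝔤 →ₗ[R] 𝔤) (hB : ∀ x : 𝔤, B x = rm (I.symm x)) :
    (∀ ξ η : Module.Dual R 𝔤,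
      ((rm (brD ξ η), I (brD ξ η)) : 𝔤 × 𝔤)
        = (⁅rm ξ, rm η⁆, ⁅B (I ξ), I η⁆ + ⁅I ξ, B (I η)⁆ + ⁅I ξ, I η⁆)) ∧
    Function.Injective (fun ξ : Module.Dual R 𝔤 => ((rm ξ, I ξ) : 𝔤 × 𝔤)) ∧
    Set.range (fun ξ : Module.Dual R 𝔤 => ((rm ξ, I ξ) : 𝔤 × 𝔤))
      = Set.range (fun x : 𝔤 => ((B x, x) : 𝔤 × 𝔤)) :=
  factorizable_bialgebra_graph_isomorphism_general rp rm brD hp hm I hI B hB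
end

section
/- Let G = {(a b; 0 1/a) : a > 0} and let B be the Rota-Baxter operator on its Lie algebra 𝔤 = span{e₁, e₂} ([e₁,e₂] = 2e₂) with matrix (−m−1, k; (−m²−m)/k, m), k ≠ 0. Let D ⊆ G ⋉_Ad G be the subgroup {((a, (m/(2k))(a−a⁻¹); 0, a⁻¹), (b, (ab^{−m}/(2k))(ab^{m+1} − a⁻¹b^{−m−1}) + (m/(2k))(b−b⁻¹) + (1/(2k))(b^{−2m−1} − b⁻¹); 0, b⁻¹)) : a, b > 0}. Then D ·_Ad (G × {e}) ≠ G ⋉_Ad G; in particular the element ((x, y; 0, 1/x), (z, ((m−1)z)/(2k) − (m+1)/(2kz); 0, 1/z)) is not in D ·_Ad (G × {e}), since membership would force a² = −1 for some real a > 0. -/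
/-- Non-integrability obstruction for the third family of Rota-Baxter operators
on the 2-dimensional non-abelian Lie algebra.  The group `G` of matrices
`(a b; 0 1/a)`, `a > 0`, is encoded as pairs `(a, b) : ℝ × ℝ` with `a > 0`;
`mul` and `inv` are the matrix product and inverse, and `sd` is the product of
the semidirect product `G ⋉_Ad G`, `(g₁,h₁)·(g₂,h₂) = (g₁g₂, h₁ g₁ h₂ g₁⁻¹)`.
With `D` the subgroup integrating `Gr(B)` for
`B = (−m−1, k; (−m²−m)/k, m)`, `k ≠ 0`, the set `D ·_Ad (G × {e})` does not
exhaust `G ⋉_Ad G`; in particular, for all `x, y, z` with `x, z > 0` the element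
`((x, y), (z, ((m−1)z)/(2k) − (m+1)/(2kz)))` is not in `D ·_Ad (G × {e})`. -/
theorem rota_baxter_not_integrable_obstruction
    (m k : ℝ) (hk : k ≠ 0)
    (mul : ℝ × ℝ → ℝ × ℝ → ℝ × ℝ)
    (hmul : ∀ p q : ℝ × ℝ, mul p q = (p.1 * q.1, p.1 * q.2 + p.2 / q.1))
    (inv : ℝ × ℝ → ℝ × ℝ) (hinv : ∀ p : ℝ × ℝ, inv p = (p.1⁻¹, -p.2))
    (sd : (ℝ × ℝ) × (ℝ × ℝ) → (ℝ × ℝ) × (ℝ × ℝ) → (ℝ × ℝ) × (ℝ × ℝ))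
    (hsd : ∀ p q : (ℝ × ℝ) × (ℝ × ℝ),
      sd p q = (mul p.1 q.1, mul p.2 (mul p.1 (mul q.2 (inv p.1)))))
    (D : Set ((ℝ × ℝ) × (ℝ × ℝ)))
    (hD : D = {w | ∃ a b : ℝ, 0 < a ∧ 0 < b ∧
      w = ((a, (m / (2 * k)) * (a - a⁻¹)),
           (b, (a * b ^ (-m) / (2 * k)) * (a * b ^ (m + 1) - a⁻¹ * b ^ (-(m + 1)))
             + (m / (2 * k)) * (b - b⁻¹)
             + (1 / (2 * k)) * (b ^ (-(2 * m + 1)) - b⁻¹)))})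
    (P : Set ((ℝ × ℝ) × (ℝ × ℝ)))
    (hP : P = {w | ∃ d ∈ D, ∃ g : ℝ × ℝ, 0 < g.1 ∧ w = sd d (g, ((1 : ℝ), (0 : ℝ)))}) :
    (∀ x y z : ℝ, 0 < x → 0 < z →
      (((x, y), (z, ((m - 1) * z) / (2 * k) - (m + 1) / (2 * k * z)))
        : (ℝ × ℝ) × (ℝ × ℝ)) ∉ P) ∧
    P ≠ {w : (ℝ × ℝ) × (ℝ × ℝ) | 0 < w.1.1 ∧ 0 < w.2.1} := by
  have main : ∀ x y z : ℝ, 0 < x → 0 < z →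
      (((x, y), (z, ((m - 1) * z) / (2 * k) - (m + 1) / (2 * k * z)))
        : (ℝ × ℝ) × (ℝ × ℝ)) ∉ P := by
    intro x y z hx hz hmem
    rw [hP] at hmem
    obtain ⟨d, hdD, g, hg, heq⟩ := hmem
    rw [hD] at hdD
    obtain ⟨a, b, ha, hb, hd⟩ := hdD
    subst hd
    simp only [hsd, hmul, hinv] at heq
    have h2 := congrArg Prod.snd heq
    simp only at h2
    have hane : a ≠ 0 := ne_of_gt ha
    have hbne : b ≠ 0 := ne_of_gt hb
    have hbz : b = z := by
      have := congrArg Prod.fst h2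
      simp only at this
      field_simp at this
      linarith
    subst hbz
    have hT := congrArg Prod.snd h2
    simp only at hT
    have ha1 : a * (1 * a⁻¹) = 1 := by field_simp
    have simpl : b * (a * (1 * -(m / (2 * k) * (a - a⁻¹)) + 0 / a⁻¹)
        + m / (2 * k) * (a - a⁻¹) / (1 * a⁻¹)) = 0 := by
      field_simp
      ring
    rw [ha1, simpl, zero_add, div_one] at hT
    -- rpow simplifications
    have e1 : b ^ (-m) * b ^ (m + 1) = b := by
      rw [← Real.rpow_add hb]; norm_num
    have e2 : b ^ (-m) * b ^ (-(m + 1)) = b ^ (-(2 * m + 1)) := by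
      rw [← Real.rpow_add hb]; ring_nf
    have expand : a * b ^ (-m) / (2 * k) * (a * b ^ (m + 1) - a⁻¹ * b ^ (-(m + 1)))
        = a ^ 2 * (b ^ (-m) * b ^ (m + 1)) / (2 * k)
          - (a * a⁻¹) * (b ^ (-m) * b ^ (-(m + 1))) / (2 * k) := by
      ring
    rw [expand, e1, e2, mul_inv_cancel₀ hane] at hT
    set u := b ^ (-(2 * m + 1)) with hu
    have h3 : a ^ 2 * b ^ 2 + b ^ 2 = 0 := by
      field_simp at hT
      have hden : (16 : ℝ) * k ^ 4 * b ^ 2 ≠ 0 := by positivity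
      have hz0 : (16 : ℝ) * k ^ 4 * b ^ 2 * (a ^ 2 * b ^ 2 + b ^ 2) = 0 := by
        linear_combination (-16 * k ^ 4 * b ^ 2) * hT
      rcases mul_eq_zero.mp hz0 with h | h
      · exact absurd h hden
      · exact h
    nlinarith [sq_nonneg (a * b), mul_pos hb hb]
  refine ⟨main, ?_⟩
  intro hPe
  have h1 : (((1, 0), (1, ((m - 1) * 1) / (2 * k) - (m + 1) / (2 * k * 1)))
      : (ℝ × ℝ) × (ℝ × ℝ)) ∈ {w : (ℝ × ℝ) × (ℝ × ℝ) | 0 < w.1.1 ∧ 0 < w.2.1} := by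
    constructor <;> norm_num
  rw [← hPe] at h1
  exact main 1 0 1 one_pos one_pos h1
end
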